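/- arXiv:1912.06069 — 5 statements merged into one kernel-verified Lean document; each statement's English description precedes it below -/
import Mathlib

section
/- Let X be a compact metric space, φ: X → X a homeomorphism, F: X → ℝ continuous and β ∈ ℝ. Let m be an e^{βF}-conformal measure and ν a σ-finite φ-invariant Borel measure on X. Let m = m_c + m_s be the Lebesgue decomposition of m with respect to ν, with m_c absolutely continuous and m_s singular with respect to ν. Then m_c(φ(B)) = ∫_B e^{βF} dm_c and m_s(φ(B)) = ∫_B e^{βF} dm_s for every Borel set B ⊆ X. -/
open MeasureTheory Filter Topology
open scoped ENNReal

/-- A Borel probability measure `m` is `e^{βF}`-conformal for the homeomorphism `φ` if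
`m(φ(B)) = ∫_B e^{βF} dm` for every Borel set `B ⊆ X`. -/
def IsConformalMeasure {X : Type*} [TopologicalSpace X] [MeasurableSpace X]
    (φ : X ≃ₜ X) (F : X → ℝ) (β : ℝ) (m : Measure X) : Prop :=
  IsProbabilityMeasure m ∧
    ∀ B : Set X, MeasurableSet B →
      m ((φ : X → X) '' B) = ∫⁻ x in B, ENNReal.ofReal (Real.exp (β * F x)) ∂m

/-- A measure `ν` is `φ`-invariant if `ν(φ⁻¹(B)) = ν(B)` for all Borel sets `B`. -/
def IsInvariantMeasure {X : Type*} [TopologicalSpace X] [MeasurableSpace X]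
    (φ : X ≃ₜ X) (ν : Measure X) : Prop :=
  ∀ B : Set X, MeasurableSet B → ν ((φ : X → X) ⁻¹' B) = ν B

theorem stmt11 {X : Type*} [MetricSpace X] [CompactSpace X]
    [MeasurableSpace X] [BorelSpace X]
    (φ : X ≃ₜ X) (F : X → ℝ) (hF : Continuous F) (β : ℝ)
    (m : Measure X) (hm : IsConformalMeasure φ F β m)
    (ν : Measure X) [SigmaFinite ν] (hν : IsInvariantMeasure φ ν)
    (mc ms : Measure X) (hdecomp : m = mc + ms)
    (hac : mc ≪ ν) (hsing : ms.MutuallySingular ν) :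
    (∀ B : Set X, MeasurableSet B →
        mc ((φ : X → X) '' B) = ∫⁻ x in B, ENNReal.ofReal (Real.exp (β * F x)) ∂mc) ∧
    (∀ B : Set X, MeasurableSet B →
        ms ((φ : X → X) '' B) = ∫⁻ x in B, ENNReal.ofReal (Real.exp (β * F x)) ∂ms) := by
  obtain ⟨hprob, hconf⟩ := hm
  set e : X → ℝ≥0∞ := fun x => ENNReal.ofReal (Real.exp (β * F x)) with he
  have hemeas : Measurable e :=
    (ENNReal.measurable_ofReal.comp (Real.measurable_exp.comp
      ((measurable_const.mul hF.measurable))))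
  -- finiteness of mc, ms
  have hmcle : mc ≤ m := by rw [hdecomp]; exact Measure.le_add_right le_rfl
  have hmsle : ms ≤ m := by rw [hdecomp]; exact Measure.le_add_left le_rfl
  have : IsFiniteMeasure m := inferInstance
  have hmcfin : IsFiniteMeasure mc := isFiniteMeasure_of_le m hmcle
  have hmsfin : IsFiniteMeasure ms := isFiniteMeasure_of_le m hmsle
  -- image sets as preimages
  have himg : ∀ B : Set X, (φ : X → X) '' B = (φ.symm : X → X) ⁻¹' B := by
    intro B
    exact φ.toEquiv.image_eq_preimage_symm B
  have hφsm : Measurable (φ.symm : X → X) := φ.symm.continuous.measurable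
  -- map φ.symm applied
  have hmap : ∀ (μ : Measure X) (B : Set X), MeasurableSet B →
      μ.map (φ.symm : X → X) B = μ ((φ : X → X) '' B) := by
    intro μ B hB
    rw [Measure.map_apply hφsm hB, himg]
  -- ν is invariant under φ.symm pushforward
  have hνmap : ν.map (φ.symm : X → X) = ν := by
    ext B hB
    rw [hmap ν B hB, himg]
    have := hν ((φ.symm : X → X) ⁻¹' B) (hφsm hB)
    rw [← this]
    congr 1
    ext x
    simp
  -- the key measure equality
  have hkey : mc.map (φ.symm : X → X) + ms.map (φ.symm : X → X)
      = mc.withDensity e + ms.withDensity e := by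
    have h1 : m.map (φ.symm : X → X) = m.withDensity e := by
      ext B hB
      rw [hmap m B hB, hconf B hB, withDensity_apply _ hB]
    calc mc.map (φ.symm : X → X) + ms.map (φ.symm : X → X)
        = m.map (φ.symm : X → X) := by
          rw [hdecomp, Measure.map_add _ _ hφsm]
      _ = m.withDensity e := h1
      _ = mc.withDensity e + ms.withDensity e := by
          rw [hdecomp, withDensity_add_measure]
  set μ : Measure X := mc.map (φ.symm : X → X) + ms.map (φ.symm : X → X) with hμ
  -- absolute continuity / singularity of the pieces
  have hA1 : mc.map (φ.symm : X → X) ≪ ν := by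
    have := (hac.map hφsm : mc.map (φ.symm : X → X) ≪ ν.map (φ.symm : X → X))
    rwa [hνmap] at this
  have hB1 : mc.withDensity e ≪ ν := (withDensity_absolutelyContinuous mc e).trans hac
  have hA2 : ms.map (φ.symm : X → X) ⟂ₘ ν := by
    have hemb : MeasurableEmbedding (φ.symm : X → X) :=
      φ.symm.measurableEmbedding
    have := hemb.mutuallySingular_map hsing
    rwa [hνmap] at this
  have hB2 : ms.withDensity e ⟂ₘ ν :=
    hsing.mono_ac (withDensity_absolutelyContinuous ms e) Measure.AbsolutelyContinuous.rfl
  -- boundedness of the density gives finiteness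
  have hbdd : ∃ C : ℝ, ∀ x, Real.exp (β * F x) ≤ C := by
    rcases isEmpty_or_nonempty X with h | h
    · exact ⟨0, fun x => (IsEmpty.false x).elim⟩
    · obtain ⟨C, -, hub⟩ :=
        (isCompact_range (Real.continuous_exp.comp (continuous_const.mul hF))).exists_isGreatest
          (Set.range_nonempty _)
      exact ⟨C, fun x => hub ⟨x, rfl⟩⟩
  obtain ⟨C, hC⟩ := hbdd
  have hfinwd : ∀ (ρ : Measure X), IsFiniteMeasure ρ → IsFiniteMeasure (ρ.withDensity e) := by
    intro ρ hρ
    constructor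
    rw [withDensity_apply _ MeasurableSet.univ]
    calc ∫⁻ x in Set.univ, e x ∂ρ ≤ ∫⁻ _ in Set.univ, ENNReal.ofReal C ∂ρ :=
          lintegral_mono fun x => ENNReal.ofReal_le_ofReal (hC x)
      _ = ENNReal.ofReal C * ρ Set.univ := by rw [setLIntegral_const]
      _ < ∞ := ENNReal.mul_lt_top ENNReal.ofReal_lt_top (measure_lt_top ρ _)
  have hI1 : IsFiniteMeasure (mc.withDensity e) := hfinwd mc hmcfin
  have hI2 : IsFiniteMeasure (ms.withDensity e) := hfinwd ms hmsfin
  -- uniqueness of Lebesgue decomposition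
  have hA1eq : mc.map (φ.symm : X → X)
      = ν.withDensity ((mc.map (φ.symm : X → X)).rnDeriv ν) :=
    ((mc.map (φ.symm : X → X)).withDensity_rnDeriv_eq ν hA1).symm
  have hB1eq : mc.withDensity e
      = ν.withDensity ((mc.withDensity e).rnDeriv ν) := by
    exact ((mc.withDensity e).withDensity_rnDeriv_eq ν hB1).symm
  have hsing_eq : ms.map (φ.symm : X → X) = ms.withDensity e := by
    have h2 : ms.map (φ.symm : X → X) = μ.singularPart ν := by
      refine Measure.eq_singularPart (f := (mc.map (φ.symm : X → X)).rnDeriv ν)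
        (Measure.measurable_rnDeriv _ _) hA2 ?_
      rw [hμ, add_comm, ← hA1eq]
    have h3 : ms.withDensity e = μ.singularPart ν := by
      refine Measure.eq_singularPart (f := (mc.withDensity e).rnDeriv ν)
        (Measure.measurable_rnDeriv _ _) hB2 ?_
      rw [hkey, add_comm, ← hB1eq]
    rw [h2, h3]
  have hac_eq : mc.map (φ.symm : X → X) = mc.withDensity e := by
    ext B hB
    have := congrArg (fun (μ : Measure X) => μ B) hkey
    simp only [hμ, Measure.add_apply, hsing_eq] at this
    have hfin : ms.withDensity e B ≠ ∞ := measure_ne_top _ _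
    exact (ENNReal.add_left_inj hfin).mp this
  constructor
  · intro B hB
    rw [← hmap mc B hB, hac_eq, withDensity_apply _ hB]
  · intro B hB
    rw [← hmap ms B hB, hsing_eq, withDensity_apply _ hB]
end

section
/- Let X be a compact metric space, φ: X → X a homeomorphism, F: X → ℝ continuous and β ∈ ℝ. Let m be an e^{βF}-conformal measure with the property that for every φ-invariant Borel set A ⊆ X with m(A) > 0 there is no Borel function u: A → ℝ satisfying β·F(x) = u(φ(x)) − u(x) for all x ∈ A. Then m is singular with respect to every σ-finite φ-invariant Borel measure on X. -/
open MeasureTheory Filter Topology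
open scoped ENNReal

theorem stmt12 {X : Type*} [MetricSpace X] [CompactSpace X]
    [MeasurableSpace X] [BorelSpace X]
    (φ : X ≃ₜ X) (F : X → ℝ) (hF : Continuous F) (β : ℝ)
    (m : Measure X) (hm : IsConformalMeasure φ F β m)
    (htypeIII : ∀ A : Set X, MeasurableSet A → (φ : X → X) ⁻¹' A = A → 0 < m A →
      ¬ ∃ u : X → ℝ, Measurable u ∧ ∀ x ∈ A, β * F x = u (φ x) - u x) :
    ∀ ν : Measure X, SigmaFinite ν → IsInvariantMeasure φ ν →
      m.MutuallySingular ν := by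
  intro ν hσν hinv
  haveI := hm.1
  haveI := hσν
  by_contra hns
  set g : X → ℝ≥0∞ := fun x => ENNReal.ofReal (Real.exp (β * F x)) with hgdef
  have hgmeas : Measurable g :=
    ENNReal.measurable_ofReal.comp (Real.continuous_exp.comp (continuous_const.mul hF)).measurable
  have hgne0 : ∀ x, g x ≠ 0 := fun x =>
    (ENNReal.ofReal_pos.mpr (Real.exp_pos _)).ne'
  set h : X → ℝ≥0∞ := m.rnDeriv ν with hhdef
  have hhmeas : Measurable h := Measure.measurable_rnDeriv m ν
  have hφm : Measurable (φ : X → X) := φ.continuous.measurable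
  have hφsm : Measurable (φ.symm : X → X) := φ.symm.continuous.measurable
  have himg : ∀ B : Set X, (φ.symm : X → X) ⁻¹' B = (φ : X → X) '' B := fun B =>
    (Equiv.image_eq_preimage_symm φ.toEquiv B).symm
  have hpre : ∀ B : Set X, (φ : X → X) ⁻¹' ((φ : X → X) '' B) = B := fun B =>
    φ.toEquiv.injective.preimage_image B
  have hinv' : ∀ B : Set X, MeasurableSet B → ν ((φ.symm : X → X) ⁻¹' B) = ν B := by
    intro B hB
    rw [himg]
    have hmB : MeasurableSet ((φ : X → X) '' B) := by rw [← himg]; exact hφsm hB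
    have := hinv _ hmB
    rw [hpre] at this
    exact this.symm
  have hmapν : ν.map (φ : X → X) = ν := by
    ext B hB
    rw [Measure.map_apply hφm hB, hinv B hB]
  -- conformality as a map/withDensity identity
  have hmapm : m.map (φ.symm : X → X) = m.withDensity g := by
    ext B hB
    rw [Measure.map_apply hφsm hB, himg, hm.2 B hB, withDensity_apply _ hB]
  -- the absolutely continuous part transforms via h ∘ φ
  have hmapwd : (ν.withDensity h).map (φ.symm : X → X) = ν.withDensity (h ∘ (φ : X → X)) := by
    ext B hB
    have hmB : MeasurableSet ((φ : X → X) '' B) := by rw [← himg]; exact hφsm hB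
    rw [Measure.map_apply hφsm hB, himg, withDensity_apply _ hmB, withDensity_apply _ hB]
    calc ∫⁻ x in (φ : X → X) '' B, h x ∂ν
        = ∫⁻ x in (φ : X → X) '' B, h x ∂(ν.map (φ : X → X)) := by rw [hmapν]
      _ = ∫⁻ x in (φ : X → X) ⁻¹' ((φ : X → X) '' B), h ((φ : X → X) x) ∂ν :=
          setLIntegral_map hmB hhmeas hφm
      _ = ∫⁻ x in B, (h ∘ (φ : X → X)) x ∂ν := by rw [hpre]; rfl
  -- the singular part stays singular under the map
  have hsing1 : (m.singularPart ν).map (φ.symm : X → X) ⟂ₘ ν := by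
    obtain ⟨E, hEm, hE1, hE2⟩ := Measure.mutuallySingular_singularPart m ν
    refine ⟨(φ : X → X) ⁻¹' E, hφm hEm, ?_, ?_⟩
    · rw [Measure.map_apply hφsm (hφm hEm), ← Set.preimage_comp]
      have : (φ : X → X) ∘ (φ.symm : X → X) = id := by
        funext x; exact φ.apply_symm_apply x
      rw [this, Set.preimage_id]
      exact hE1
    · rw [← Set.preimage_compl, hinv _ hEm.compl]
      exact hE2
  have hdecomp : m = m.singularPart ν + ν.withDensity h :=
    (Measure.haveLebesgueDecomposition_add m ν)
  haveI : IsProbabilityMeasure (m.map (φ.symm : X → X)) :=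
    Measure.isProbabilityMeasure_map hφsm.aemeasurable
  -- two decompositions of m.map φ.symm
  have eq1 : m.map (φ.symm : X → X)
      = (m.singularPart ν).map (φ.symm : X → X) + ν.withDensity (h ∘ (φ : X → X)) := by
    conv_lhs => rw [hdecomp]
    rw [Measure.map_add _ _ hφsm, hmapwd]
  have eq2 : m.map (φ.symm : X → X)
      = (m.singularPart ν).withDensity g + ν.withDensity (h * g) := by
    rw [hmapm]
    conv_lhs => rw [hdecomp]
    rw [withDensity_add_measure, withDensity_mul ν hhmeas hgmeas]
  have hsing2 : (m.singularPart ν).withDensity g ⟂ₘ ν :=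
    (Measure.mutuallySingular_singularPart m ν).mono_ac
      (withDensity_absolutelyContinuous _ _) Measure.AbsolutelyContinuous.rfl
  have key1 : (h ∘ (φ : X → X)) =ᵐ[ν] (m.map (φ.symm : X → X)).rnDeriv ν :=
    Measure.eq_rnDeriv (hhmeas.comp hφm) hsing1 eq1
  have key2 : (h * g) =ᵐ[ν] (m.map (φ.symm : X → X)).rnDeriv ν :=
    Measure.eq_rnDeriv (hhmeas.mul hgmeas) hsing2 eq2
  have key : ∀ᵐ x ∂ν, h ((φ : X → X) x) = h x * g x := by
    filter_upwards [key1, key2.symm] with x h1 h2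
    exact h1.trans h2
  -- the good set
  set G : Set X := {x | h ((φ : X → X) x) = h x * g x ∧ h x ≠ ∞} with hGdef
  have hGmeas : MeasurableSet G := by
    refine MeasurableSet.inter ?_ ?_
    · exact (hhmeas.comp hφm).stronglyMeasurable.measurableSet_eq_fun
        (hhmeas.mul hgmeas).stronglyMeasurable
    · exact (hhmeas (measurableSet_singleton ∞)).compl
  have hGnull : ν Gᶜ = 0 := by
    have hae : ∀ᵐ x ∂ν, x ∈ G := by
      filter_upwards [key, Measure.rnDeriv_ne_top m ν] with x h1 h2
      exact ⟨h1, h2⟩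
    exact ae_iff.1 hae
  -- invariance of measure under iterates
  have hiter : ∀ (n : ℕ) (C : Set X), MeasurableSet C →
      ν ((φ : X → X)^[n] ⁻¹' C) = ν C := by
    intro n
    induction n with
    | zero => intro C _; simp
    | succ k ih =>
      intro C hC
      rw [Function.iterate_succ, Set.preimage_comp, hinv _ ((hφm.iterate k) hC), ih C hC]
  have hiter' : ∀ (n : ℕ) (C : Set X), MeasurableSet C →
      ν ((φ.symm : X → X)^[n] ⁻¹' C) = ν C := by
    intro n
    induction n with
    | zero => intro C _; simp
    | succ k ih =>
      intro C hC
      rw [Function.iterate_succ, Set.preimage_comp, hinv' _ ((hφsm.iterate k) hC), ih C hC]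
  -- the invariant saturation of G
  set A₀ : Set X := ⋂ n : ℕ, ((φ : X → X)^[n] ⁻¹' G ∩ (φ.symm : X → X)^[n] ⁻¹' G) with hA₀def
  have hA₀mem : ∀ x, x ∈ A₀ ↔ ∀ n : ℕ,
      (φ : X → X)^[n] x ∈ G ∧ (φ.symm : X → X)^[n] x ∈ G := by
    intro x; simp [hA₀def, Set.mem_iInter]
  have hA₀meas : MeasurableSet A₀ :=
    MeasurableSet.iInter fun n =>
      ((hφm.iterate n) hGmeas).inter ((hφsm.iterate n) hGmeas)
  have hA₀inv : (φ : X → X) ⁻¹' A₀ = A₀ := by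
    ext x
    simp only [Set.mem_preimage, hA₀mem]
    constructor
    · intro H n
      constructor
      · rcases n with _ | k
        · have := (H 1).2
          simpa [φ.symm_apply_apply] using this
        · have := (H k).1
          rwa [← Function.iterate_succ_apply] at this
      · have := (H (n + 1)).2
        rwa [Function.iterate_succ_apply, φ.symm_apply_apply] at this
    · intro H n
      constructor
      · have := (H (n + 1)).1
        rwa [Function.iterate_succ_apply] at this
      · rcases n with _ | k
        · simpa using (H 1).1
        · have := (H k).2
          rwa [Function.iterate_succ_apply, φ.symm_apply_apply]
  have hA₀null : ν A₀ᶜ = 0 := by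
    rw [hA₀def, Set.compl_iInter]
    refine measure_iUnion_null fun n => ?_
    rw [Set.compl_inter]
    refine measure_union_null ?_ ?_
    · rw [← Set.preimage_compl, hiter n Gᶜ hGmeas.compl]; exact hGnull
    · rw [← Set.preimage_compl, hiter' n Gᶜ hGmeas.compl]; exact hGnull
  have hA₀G : ∀ x, x ∈ A₀ → x ∈ G := by
    intro x hx
    have := (hA₀mem x).1 hx 0
    simpa using this.1
  -- the final invariant set
  set A : Set X := A₀ ∩ {x | h x ≠ 0} with hAdef
  have hAmeas : MeasurableSet A :=
    hA₀meas.inter (hhmeas (measurableSet_singleton 0)).compl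
  have hAinv : (φ : X → X) ⁻¹' A = A := by
    ext x
    simp only [hAdef, Set.mem_preimage, Set.mem_inter_iff, Set.mem_setOf_eq]
    have hmemA₀ : (φ : X → X) x ∈ A₀ ↔ x ∈ A₀ := by
      rw [← Set.mem_preimage, hA₀inv]
    constructor
    · rintro ⟨h1, h2⟩
      have hx₀ : x ∈ A₀ := hmemA₀.1 h1
      refine ⟨hx₀, ?_⟩
      have hxG := hA₀G x hx₀
      rw [hxG.1] at h2
      exact fun h0 => h2 (by rw [h0, zero_mul])
    · rintro ⟨h1, h2⟩
      refine ⟨hmemA₀.2 h1, ?_⟩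
      have hxG := hA₀G x h1
      rw [hxG.1]
      exact mul_ne_zero h2 (hgne0 x)
  -- positivity of m A
  have hwdne : ν.withDensity h ≠ 0 := by
    intro h0
    exact hns ((Measure.withDensity_rnDeriv_eq_zero m ν).1 h0)
  have hSmeas : MeasurableSet {x | h x ≠ 0} :=
    (hhmeas (measurableSet_singleton 0)).compl
  have hAeq : ∫⁻ x in A, h x ∂ν = ∫⁻ x in {x | h x ≠ 0}, h x ∂ν := by
    refine setLIntegral_congr ?_
    rw [hAdef]
    have h1 : ν ((A₀ ∩ {x | h x ≠ 0}) \ {x | h x ≠ 0}) = 0 := by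
      simp [Set.diff_eq, Set.inter_assoc]
    have h2 : ν ({x | h x ≠ 0} \ (A₀ ∩ {x | h x ≠ 0})) = 0 := by
      refine measure_mono_null ?_ hA₀null
      intro x hx
      rcases hx with ⟨hx1, hx2⟩
      intro hx0
      exact hx2 ⟨hx0, hx1⟩
    rw [MeasureTheory.ae_eq_set]
    exact ⟨h1, h2⟩
  have hzero : ∫⁻ x in {x | h x ≠ 0}ᶜ, h x ∂ν = 0 := by
    have hae : ∀ᵐ x ∂(ν.restrict {x | h x ≠ 0}ᶜ), h x = 0 := by
      refine (ae_restrict_iff' hSmeas.compl).2 (ae_of_all _ ?_)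
      intro x hx
      simpa using hx
    rw [lintegral_congr_ae hae, lintegral_zero]
  have hSint : ∫⁻ x in {x | h x ≠ 0}, h x ∂ν = ∫⁻ x, h x ∂ν := by
    conv_rhs => rw [← lintegral_add_compl h hSmeas (μ := ν)]
    rw [hzero, add_zero]
  have hApos : 0 < m A := by
    have hwA : ν.withDensity h A = ν.withDensity h Set.univ := by
      rw [withDensity_apply _ hAmeas, withDensity_apply _ MeasurableSet.univ,
        Measure.restrict_univ, hAeq, hSint]
    have hwne : ν.withDensity h Set.univ ≠ 0 := by
      intro h0
      apply hwdne
      ext B hB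
      simp only [Measure.coe_zero, Pi.zero_apply]
      exact measure_mono_null (Set.subset_univ B) h0
    have : m A = m.singularPart ν A + ν.withDensity h A := by
      conv_lhs => rw [hdecomp]
      rfl
    rw [this, hwA]
    exact lt_of_lt_of_le (pos_iff_ne_zero.2 hwne) le_add_self
  -- the coboundary
  refine htypeIII A hAmeas hAinv hApos ⟨fun x => Real.log (h x).toReal,
    Real.measurable_log.comp hhmeas.ennreal_toReal, ?_⟩
  intro x hx
  rcases hx with ⟨hxA₀, hxne0⟩
  have hxG : x ∈ G := hA₀G x hxA₀
  have hxpos : 0 < (h x).toReal := ENNReal.toReal_pos hxne0 hxG.2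
  have hphi : (h ((φ : X → X) x)).toReal = (h x).toReal * Real.exp (β * F x) := by
    rw [hxG.1, ENNReal.toReal_mul, hgdef, ENNReal.toReal_ofReal (Real.exp_pos _).le]
  simp only
  rw [hphi, Real.log_mul hxpos.ne' (Real.exp_ne_zero _), Real.log_exp]
  ring
end

section
/- Let X be a compact metric space, φ: X → X a homeomorphism, F: X → ℝ continuous and β ∈ ℝ. Let m be an e^{βF}-conformal measure and assume h: X → ℝ is a Borel function such that β·F(x) = h(φ(x)) − h(x) for m-almost all x ∈ X. Then there is a σ-finite φ-invariant Borel measure ν on X that is equivalent to m (each is absolutely continuous with respect to the other) and satisfies dν = e^{−h} dm. -/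
open MeasureTheory Filter Topology
open scoped ENNReal

theorem stmt13 {X : Type*} [MetricSpace X] [CompactSpace X]
    [MeasurableSpace X] [BorelSpace X]
    (φ : X ≃ₜ X) (F : X → ℝ) (hF : Continuous F) (β : ℝ)
    (m : Measure X) (hm : IsConformalMeasure φ F β m)
    (h : X → ℝ) (hmeas : Measurable h)
    (hcoh : ∀ᵐ x ∂m, β * F x = h (φ x) - h x) :
    ∃ ν : Measure X, SigmaFinite ν ∧ IsInvariantMeasure φ ν ∧
      ν ≪ m ∧ m ≪ ν ∧
      ν = m.withDensity (fun x => ENNReal.ofReal (Real.exp (-h x))) := by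
  obtain ⟨hprob, hconf⟩ := hm
  set g : X → ℝ≥0∞ := fun x => ENNReal.ofReal (Real.exp (-h x)) with hg
  have hgmeas : Measurable g := (hmeas.neg.exp).ennreal_ofReal
  set e : X → ℝ≥0∞ := fun x => ENNReal.ofReal (Real.exp (β * F x)) with he
  have hemeas : Measurable e := ((hF.measurable.const_mul β).exp).ennreal_ofReal
  set w : Measure X := m.withDensity e with hw
  have hφm : Measurable (φ : X → X) := φ.continuous.measurable
  -- map φ w = m
  have hmap : Measure.map (φ : X → X) w = m := by
    ext B hB
    rw [Measure.map_apply hφm hB, hw,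
      withDensity_apply _ (hφm hB), ← hconf _ (hφm hB),
      Set.image_preimage_eq B φ.surjective]
  refine ⟨m.withDensity g, ?_, ?_, withDensity_absolutelyContinuous _ _, ?_, rfl⟩
  · exact SigmaFinite.withDensity_ofReal _
  · intro B hB
    have key : ∀ᵐ x ∂m, g x = (g ∘ (φ : X → X)) x * e x := by
      filter_upwards [hcoh] with x hx
      simp only [Function.comp_apply, hg, he,
        ← ENNReal.ofReal_mul (Real.exp_nonneg _), ← Real.exp_add]
      congr 2
      rw [hx]; ring
    calc (m.withDensity g) ((φ : X → X) ⁻¹' B)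
        = ∫⁻ x in (φ : X → X) ⁻¹' B, g x ∂m := withDensity_apply _ (hφm hB)
      _ = ∫⁻ x in (φ : X → X) ⁻¹' B, (g ∘ (φ : X → X)) x * e x ∂m := by
          exact setLIntegral_congr_fun_ae (hφm hB) (key.mono fun x hx _ => hx)
      _ = ∫⁻ x in (φ : X → X) ⁻¹' B, e x * (g ∘ (φ : X → X)) x ∂m := by
          simp_rw [mul_comm]
      _ = ∫⁻ x in (φ : X → X) ⁻¹' B, (g ∘ (φ : X → X)) x ∂w := by
          rw [hw, setLIntegral_withDensity_eq_setLIntegral_mul _ hemeas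
            (hgmeas.comp hφm) (hφm hB)]
          rfl
      _ = ∫⁻ y in B, g y ∂(Measure.map (φ : X → X) w) :=
          (setLIntegral_map hB hgmeas hφm).symm
      _ = ∫⁻ y in B, g y ∂m := by rw [hmap]
      _ = (m.withDensity g) B := (withDensity_apply _ hB).symm
  · have : m.withDensity (g * fun x => ENNReal.ofReal (Real.exp (h x))) = m := by
      have : (g * fun x => ENNReal.ofReal (Real.exp (h x))) = 1 := by
        funext x
        simp only [hg, Pi.mul_apply, Pi.one_apply,
          ← ENNReal.ofReal_mul (Real.exp_nonneg _), ← Real.exp_add]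
        simp
      rw [this, withDensity_one]
    conv_lhs => rw [← this]
    rw [withDensity_mul _ hgmeas (hmeas.exp.ennreal_ofReal)]
    exact withDensity_absolutelyContinuous _ _
end

section
/- Let X be a compact metric space, φ: X → X a homeomorphism, F: X → ℝ continuous and β ∈ ℝ. Let m be a φ-ergodic e^{βF}-conformal measure, and let μ₁ and μ₂ be σ-finite φ-invariant Borel measures on X, each of which is equivalent to m (mutually absolutely continuous with m). Then μ₁ and μ₂ are proportional: there is a constant c > 0 with μ₁ = c·μ₂. -/
open MeasureTheory Filter Topology
open scoped ENNReal

/-- A measure `m` is `φ`-ergodic if every Borel set `B` with `φ⁻¹(B) = B` satisfies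
`m(B) = 0` or `m(X \ B) = 0`. -/
def IsErgodicMeasure {X : Type*} [TopologicalSpace X] [MeasurableSpace X]
    (φ : X ≃ₜ X) (m : Measure X) : Prop :=
  ∀ B : Set X, MeasurableSet B → (φ : X → X) ⁻¹' B = B → m B = 0 ∨ m Bᶜ = 0

theorem stmt14 {X : Type*} [MetricSpace X] [CompactSpace X]
    [MeasurableSpace X] [BorelSpace X]
    (φ : X ≃ₜ X) (F : X → ℝ) (hF : Continuous F) (β : ℝ)
    (m : Measure X) (hm : IsConformalMeasure φ F β m) (herg : IsErgodicMeasure φ m)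
    (μ₁ μ₂ : Measure X) [SigmaFinite μ₁] [SigmaFinite μ₂]
    (hinv₁ : IsInvariantMeasure φ μ₁) (hinv₂ : IsInvariantMeasure φ μ₂)
    (h₁m : μ₁ ≪ m) (hm₁ : m ≪ μ₁) (h₂m : μ₂ ≪ m) (hm₂ : m ≪ μ₂) :
    ∃ c : ℝ≥0∞, 0 < c ∧ c ≠ ⊤ ∧ μ₁ = c • μ₂ := by
  obtain ⟨hmprob, hconf⟩ := hm
  have hφmeas : Measurable (φ : X → X) := φ.continuous.measurable
  have hφsymm : Measurable (φ.symm : X → X) := φ.symm.continuous.measurable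
  -- key: m(φ⁻¹ B) = 0 ↔ m B = 0 for measurable B
  have key : ∀ B : Set X, MeasurableSet B → (m ((φ : X → X) ⁻¹' B) = 0 ↔ m B = 0) := by
    intro B hB
    have h1 : m B = ∫⁻ x in (φ : X → X) ⁻¹' B, ENNReal.ofReal (Real.exp (β * F x)) ∂m := by
      have := hconf _ (hB.preimage hφmeas)
      rwa [Set.image_preimage_eq B φ.surjective] at this
    constructor
    · intro h0
      rw [h1, Measure.restrict_eq_zero.mpr h0, lintegral_zero_measure]
    · intro h0
      rw [h1] at h0
      have hmeas : Measurable fun x => ENNReal.ofReal (Real.exp (β * F x)) :=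
        (ENNReal.measurable_ofReal.comp ((Real.continuous_exp.measurable).comp
          ((hF.measurable).const_mul β)))
      have := (lintegral_eq_zero_iff hmeas).mp h0
      rw [Filter.EventuallyEq, ae_iff] at this
      have hall : {x | ¬ ENNReal.ofReal (Real.exp (β * F x)) = (0 : X → ℝ≥0∞) x} = Set.univ := by
        ext x
        simp only [Set.mem_setOf_eq, Set.mem_univ, iff_true, Pi.zero_apply]
        exact fun h => by
          have := Real.exp_pos (β * F x)
          simp [ENNReal.ofReal_eq_zero] at h
          linarith
      rw [hall, Measure.restrict_apply_univ] at this
      exact this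
  -- Quasi measure preserving
  have hqmp : Measure.QuasiMeasurePreserving (φ : X → X) m m := by
    refine ⟨hφmeas, Measure.AbsolutelyContinuous.mk fun s hs h0 => ?_⟩
    rw [Measure.map_apply hφmeas hs]
    exact (key s hs).mpr h0
  -- Pre-ergodic
  have hpre : PreErgodic (φ : X → X) m := by
    constructor
    intro s hs hfs
    rcases herg s hs hfs with h | h
    · exact Filter.eventuallyConst_set.mpr (Or.inr (measure_eq_zero_iff_ae_notMem.mp h))
    · refine Filter.eventuallyConst_set.mpr (Or.inl ?_)
      rw [ae_iff]
      exact h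
  have hqe : QuasiErgodic (φ : X → X) m := ⟨hqmp, hpre⟩
  -- invariance as map equality
  have hmap₂ : Measure.map (φ : X → X) μ₂ = μ₂ :=
    Measure.ext fun B hB => by rw [Measure.map_apply hφmeas hB]; exact hinv₂ B hB
  -- Radon–Nikodym derivative
  set f := μ₁.rnDeriv μ₂ with hf
  have h12 : μ₁ ≪ μ₂ := h₁m.trans hm₂
  have hwd : μ₂.withDensity f = μ₁ := Measure.withDensity_rnDeriv_eq μ₁ μ₂ h12
  have hfmeas : Measurable f := Measure.measurable_rnDeriv μ₁ μ₂
  -- μ₂.withDensity (f ∘ φ) = μ₁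
  have hcomp : μ₂.withDensity (f ∘ (φ : X → X)) = μ₁ := by
    refine Measure.ext fun B hB => ?_
    have hB' : MeasurableSet ((φ : X → X) '' B) := by
      rw [← Homeomorph.preimage_symm]
      exact hB.preimage hφsymm
    have hpre' : (φ : X → X) ⁻¹' ((φ : X → X) '' B) = B :=
      Set.preimage_image_eq B φ.injective
    calc μ₂.withDensity (f ∘ (φ : X → X)) B
        = ∫⁻ x in B, f ((φ : X → X) x) ∂μ₂ := withDensity_apply _ hB
      _ = ∫⁻ y in (φ : X → X) '' B, f y ∂(Measure.map (φ : X → X) μ₂) := by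
          rw [setLIntegral_map hB' hfmeas hφmeas, hpre']
      _ = ∫⁻ y in (φ : X → X) '' B, f y ∂μ₂ := by rw [hmap₂]
      _ = μ₂.withDensity f ((φ : X → X) '' B) := (withDensity_apply _ hB').symm
      _ = μ₁ ((φ : X → X) '' B) := by rw [hwd]
      _ = μ₁ B := by rw [← hinv₁ _ hB', hpre']
  -- f ∘ φ =ᵐ[μ₂] f
  have hinvf : f ∘ (φ : X → X) =ᵐ[μ₂] f := by
    have h1 : (μ₂.withDensity (f ∘ (φ : X → X))).rnDeriv μ₂ =ᵐ[μ₂] f ∘ (φ : X → X) :=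
      Measure.rnDeriv_withDensity μ₂ (hfmeas.comp hφmeas)
    rw [hcomp] at h1
    exact h1.symm
  -- transfer to m and apply ergodicity
  have hinvfm : f ∘ (φ : X → X) =ᵐ[m] f := hm₂.ae_eq hinvf
  obtain ⟨c, hc⟩ := hqe.ae_eq_const_of_ae_eq_comp₀ hfmeas.nullMeasurable hinvfm
  -- back to μ₂
  have hc₂ : f =ᵐ[μ₂] fun _ => c := h₂m.ae_eq hc
  have hμ₁eq : μ₁ = c • μ₂ := by
    rw [← hwd, withDensity_congr_ae hc₂, withDensity_const]
  -- μ₂ ≠ 0 and μ₁ ≠ 0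
  have hm0 : m ≠ 0 := IsProbabilityMeasure.ne_zero m
  have hμ₂0 : μ₂ ≠ 0 := fun h => hm0 (by
    have : m Set.univ = 0 := hm₂ (by simp [h])
    exact Measure.measure_univ_eq_zero.mp this)
  have hμ₁0 : μ₁ ≠ 0 := fun h => hm0 (by
    have : m Set.univ = 0 := hm₁ (by simp [h])
    exact Measure.measure_univ_eq_zero.mp this)
  -- c ≠ ⊤
  have hctop : c ≠ ⊤ := by
    have hlt : ∀ᵐ x ∂μ₂, f x < ⊤ := Measure.rnDeriv_lt_top μ₁ μ₂
    have hb : ∀ᵐ x ∂μ₂, f x < ⊤ ∧ f x = c := hlt.and hc₂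
    haveI : (ae μ₂).NeBot := ae_neBot.mpr hμ₂0
    obtain ⟨x, hx1, hx2⟩ := hb.exists
    rw [hx2] at hx1
    exact hx1.ne
  -- c > 0
  have hcpos : 0 < c := by
    have hpos : ∀ᵐ x ∂μ₁, 0 < f x := Measure.rnDeriv_pos h12
    have hc₁ : f =ᵐ[μ₁] fun _ => c := h12.ae_eq hc₂
    have hb : ∀ᵐ x ∂μ₁, 0 < f x ∧ f x = c := hpos.and hc₁
    haveI : (ae μ₁).NeBot := ae_neBot.mpr hμ₁0
    obtain ⟨x, hx1, hx2⟩ := hb.exists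
    rwa [hx2] at hx1
  exact ⟨c, hcpos, hctop, hμ₁eq⟩
end

section
/- Let X be a compact metric space, φ: X → X a homeomorphism, F: X → ℝ continuous and β ∈ ℝ with β ≠ 0. (a) Let x ∈ X satisfy φ^p(x) = x where p ≥ 1 is the minimal period of x. Then there exists an e^{βF}-conformal measure concentrated on the φ-orbit of x if and only if ∑_{i=0}^{p-1} F(φ^i(x)) = 0. (b) Let x ∈ X be a point that is not φ-periodic. Then there exists an e^{βF}-conformal measure concentrated on the φ-orbit {φ^k(x) : k ∈ ℤ} of x if and only if ∑_{k∈ℤ} e^{β·S_k(F)(x)} < ∞. -/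
open MeasureTheory Filter Topology ENNReal
set_option linter.unusedSectionVars false
open scoped Classical

/-- The (two-sided) `φ`-orbit `{φᵏ(x) : k ∈ ℤ}` of a point `x`. -/
def zOrbit {X : Type*} [TopologicalSpace X] (φ : X ≃ₜ X) (x : X) : Set X :=
  {y : X | ∃ n : ℕ, y = (φ : X → X)^[n] x ∨ y = (φ.symm : X → X)^[n] x}

/-- The Birkhoff sum `S_k(F)` for `k : ℤ`:
`S_k(F) = ∑_{j=0}^{k-1} F ∘ φ^j` for `k ≥ 1`, `S_0(F) = 0`, and
`S_k(F) = −∑_{j=1}^{|k|} F ∘ φ^{−j}` for `k ≤ −1`. -/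
noncomputable def birkhoffZ {X : Type*} [TopologicalSpace X]
    (φ : X ≃ₜ X) (F : X → ℝ) (k : ℤ) (x : X) : ℝ :=
  if 0 ≤ k then ∑ j ∈ Finset.range k.toNat, F ((φ : X → X)^[j] x)
  else -∑ j ∈ Finset.range (-k).toNat, F ((φ.symm : X → X)^[j + 1] x)

namespace Stmt15

variable {X : Type*} [MetricSpace X] [MeasurableSpace X] [BorelSpace X]

noncomputable def pt (φ : X ≃ₜ X) (x : X) (k : ℤ) : X := (φ.toEquiv ^ k) x

lemma pt_natCast (φ : X ≃ₜ X) (x : X) (n : ℕ) : pt φ x n = (φ : X → X)^[n] x := by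
  simp only [pt, zpow_natCast, Equiv.Perm.coe_pow]
  rfl

lemma pt_neg_natCast (φ : X ≃ₜ X) (x : X) (n : ℕ) :
    pt φ x (-(n : ℤ)) = (φ.symm : X → X)^[n] x := by
  simp only [pt, zpow_neg, zpow_natCast, ← inv_pow, Equiv.Perm.coe_pow]
  rfl

lemma pt_zero (φ : X ≃ₜ X) (x : X) : pt φ x 0 = x := by simp [pt]

lemma pt_add_one (φ : X ≃ₜ X) (x : X) (k : ℤ) : pt φ x (k + 1) = φ (pt φ x k) := by
  simp only [pt]
  rw [add_comm, zpow_add, zpow_one]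
  rfl

lemma pt_sub_one (φ : X ≃ₜ X) (x : X) (k : ℤ) : pt φ x (k - 1) = φ.symm (pt φ x k) := by
  have h := pt_add_one φ x (k - 1)
  rw [sub_add_cancel] at h
  rw [h, Homeomorph.symm_apply_apply]

lemma zOrbit_eq_range (φ : X ≃ₜ X) (x : X) : zOrbit φ x = Set.range (pt φ x) := by
  ext y
  constructor
  · rintro ⟨n, h | h⟩
    · exact ⟨(n : ℤ), (pt_natCast φ x n).trans h.symm⟩
    · exact ⟨-(n : ℤ), (pt_neg_natCast φ x n).trans h.symm⟩
  · rintro ⟨k, rfl⟩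
    rcases le_or_gt 0 k with hk | hk
    · refine ⟨k.toNat, Or.inl ?_⟩
      rw [← pt_natCast]
      congr 1
      omega
    · refine ⟨(-k).toNat, Or.inr ?_⟩
      rw [← pt_neg_natCast]
      congr 1
      omega

lemma zOrbit_countable (φ : X ≃ₜ X) (x : X) : (zOrbit φ x).Countable := by
  rw [zOrbit_eq_range]; exact Set.countable_range _

lemma birkhoffZ_zero (φ : X ≃ₜ X) (F : X → ℝ) (x : X) : birkhoffZ φ F 0 x = 0 := by
  simp [birkhoffZ]

lemma birkhoffZ_add_one (φ : X ≃ₜ X) (F : X → ℝ) (x : X) (k : ℤ) :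
    birkhoffZ φ F (k + 1) x = birkhoffZ φ F k x + F (pt φ x k) := by
  rcases le_or_gt 0 k with hk | hk
  · rw [birkhoffZ, birkhoffZ, if_pos (by omega), if_pos hk]
    rw [show (k + 1).toNat = k.toNat + 1 by omega, Finset.sum_range_succ]
    congr 2
    rw [← pt_natCast]
    congr 1
    omega
  · have h1 : birkhoffZ φ F (k + 1) x
        = -∑ j ∈ Finset.range (-(k + 1)).toNat, F ((φ.symm : X → X)^[j + 1] x) := by
      rcases eq_or_lt_of_le (show k + 1 ≤ 0 by omega) with h | h
      · rw [h, birkhoffZ, if_pos le_rfl]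
        simp
      · rw [birkhoffZ, if_neg (by omega)]
    rw [h1, birkhoffZ, if_neg (by omega)]
    rw [show (-k).toNat = (-(k + 1)).toNat + 1 by omega, Finset.sum_range_succ]
    have hpt : pt φ x k = (φ.symm : X → X)^[(-(k + 1)).toNat + 1] x := by
      rw [← pt_neg_natCast]
      congr 1
      omega
    rw [hpt]
    ring

lemma ofReal_exp_add (a b : ℝ) : ENNReal.ofReal (Real.exp (a + b))
    = ENNReal.ofReal (Real.exp a) * ENNReal.ofReal (Real.exp b) := by
  rw [Real.exp_add, ENNReal.ofReal_mul (Real.exp_nonneg a)]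

noncomputable def atomic {ι : Type*} (c : ι → ℝ≥0∞) (g : ι → X) : Measure X :=
  Measure.sum fun i => c i • Measure.dirac (g i)

lemma atomic_apply {ι : Type*} (c : ι → ℝ≥0∞) (g : ι → X) {B : Set X} (hB : MeasurableSet B) :
    atomic c g B = ∑' i, if g i ∈ B then c i else 0 := by
  rw [atomic, Measure.sum_apply _ hB]
  refine tsum_congr fun i => ?_
  rw [Measure.smul_apply, Measure.dirac_apply' _ hB, smul_eq_mul]
  by_cases h : g i ∈ B <;> simp [Set.indicator_apply, h]

lemma atomic_lintegral {ι : Type*} (c : ι → ℝ≥0∞) (g : ι → X) {f : X → ℝ≥0∞}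
    (hf : Measurable f) {B : Set X} (hB : MeasurableSet B) :
    ∫⁻ y in B, f y ∂(atomic c g) = ∑' i, if g i ∈ B then c i * f (g i) else 0 := by
  rw [atomic, Measure.restrict_sum _ hB, lintegral_sum_measure]
  refine tsum_congr fun i => ?_
  rw [Measure.restrict_smul, lintegral_smul_measure]
  classical
  rw [MeasureTheory.restrict_dirac' hB]
  by_cases h : g i ∈ B
  · rw [if_pos h, if_pos h, lintegral_dirac' _ hf, smul_eq_mul]
  · rw [if_neg h, if_neg h, lintegral_zero_measure, smul_zero]

lemma atomic_conformal {ι : Type*} (φ : X ≃ₜ X) (F : X → ℝ) (hF : Continuous F) (β : ℝ)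
    (c : ι → ℝ≥0∞) (g : ι → X) (e : ι ≃ ι)
    (hg : ∀ i, g (e i) = φ (g i))
    (hc : ∀ i, c (e i) = c i * ENNReal.ofReal (Real.exp (β * F (g i))))
    {B : Set X} (hB : MeasurableSet B) :
    atomic c g ((φ : X → X) '' B)
      = ∫⁻ y in B, ENNReal.ofReal (Real.exp (β * F y)) ∂(atomic c g) := by
  have hmeas : Measurable fun y => ENNReal.ofReal (Real.exp (β * F y)) :=
    (ENNReal.continuous_ofReal.comp (Real.continuous_exp.comp (continuous_const.mul hF))).measurable
  have himg : (φ : X → X) '' B = (φ.symm : X → X) ⁻¹' B :=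
    φ.toEquiv.image_eq_preimage_symm B
  have hB' : MeasurableSet ((φ : X → X) '' B) := by
    rw [himg]; exact φ.symm.continuous.measurable hB
  rw [atomic_apply _ _ hB', atomic_lintegral _ _ hmeas hB]
  rw [← e.tsum_eq (fun i => if g i ∈ (φ : X → X) '' B then c i else 0)]
  refine tsum_congr fun i => ?_
  rw [hg, hc]
  have hmem : (φ : X → X) (g i) ∈ (φ : X → X) '' B ↔ g i ∈ B :=
    φ.injective.mem_set_image
  by_cases h : g i ∈ B <;> simp [hmem, h]

lemma atomic_compl_orbit {ι : Type*} (φ : X ≃ₜ X) (x : X) (c : ι → ℝ≥0∞) (g : ι → X)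
    (hg : ∀ i, g i ∈ zOrbit φ x) : atomic c g ((zOrbit φ x)ᶜ) = 0 := by
  rw [atomic_apply _ _ (zOrbit_countable φ x).measurableSet.compl]
  simp [hg]

lemma build_conformal {ι : Type*} (φ : X ≃ₜ X) (F : X → ℝ) (hF : Continuous F) (β : ℝ) (x : X)
    (c : ι → ℝ≥0∞) (g : ι → X) (e : ι ≃ ι)
    (hg : ∀ i, g (e i) = φ (g i))
    (hc : ∀ i, c (e i) = c i * ENNReal.ofReal (Real.exp (β * F (g i))))
    (hgo : ∀ i, g i ∈ zOrbit φ x)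
    (Z : ℝ) (hZpos : 0 < Z) (hZ : atomic c g Set.univ = ENNReal.ofReal Z) :
    ∃ m : Measure X, IsConformalMeasure φ F β m ∧ m ((zOrbit φ x)ᶜ) = 0 := by
  refine ⟨(ENNReal.ofReal Z)⁻¹ • atomic c g, ⟨⟨?_⟩, fun B hB => ?_⟩, ?_⟩
  · rw [Measure.smul_apply, hZ, smul_eq_mul,
      ENNReal.inv_mul_cancel (ENNReal.ofReal_pos.mpr hZpos).ne' ENNReal.ofReal_ne_top]
  · rw [Measure.smul_apply, Measure.restrict_smul, lintegral_smul_measure, smul_eq_mul]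
    congr 1
    exact atomic_conformal φ F hF β c g e hg hc hB
  · rw [Measure.smul_apply, atomic_compl_orbit φ x c g hgo, smul_zero]

lemma conf_singleton (φ : X ≃ₜ X) (F : X → ℝ) (β : ℝ) {m : Measure X}
    (hconf : ∀ B : Set X, MeasurableSet B →
      m ((φ : X → X) '' B) = ∫⁻ y in B, ENNReal.ofReal (Real.exp (β * F y)) ∂m)
    (y : X) : m {(φ : X → X) y} = ENNReal.ofReal (Real.exp (β * F y)) * m {y} := by
  have h := hconf {y} (measurableSet_singleton y)
  rwa [Set.image_singleton, lintegral_singleton] at h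

end Stmt15

theorem stmt15 {X : Type*} [MetricSpace X] [CompactSpace X]
    [MeasurableSpace X] [BorelSpace X]
    (φ : X ≃ₜ X) (F : X → ℝ) (hF : Continuous F) (β : ℝ) (hβ : β ≠ 0) :
    (∀ (x : X) (p : ℕ), 1 ≤ p → (φ : X → X)^[p] x = x →
      (∀ j : ℕ, 1 ≤ j → j < p → (φ : X → X)^[j] x ≠ x) →
      ((∃ m : Measure X, IsConformalMeasure φ F β m ∧ m ((zOrbit φ x)ᶜ) = 0) ↔
        ∑ i ∈ Finset.range p, F ((φ : X → X)^[i] x) = 0)) ∧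
    (∀ x : X, (∀ n : ℕ, 1 ≤ n → (φ : X → X)^[n] x ≠ x) →
      ((∃ m : Measure X, IsConformalMeasure φ F β m ∧ m ((zOrbit φ x)ᶜ) = 0) ↔
        Summable (fun k : ℤ => Real.exp (β * birkhoffZ φ F k x)))) := by
  constructor
  · -- part (a): periodic point
    intro x p hp hper _hmin
    obtain ⟨q, rfl⟩ : ∃ q, p = q + 1 := ⟨p - 1, by omega⟩
    have hcomm : ∀ j : ℕ, (φ : X → X)^[q + 1] ((φ : X → X)^[j] x) = (φ : X → X)^[j] x := by
      intro j
      rw [← Function.iterate_add_apply, add_comm, Function.iterate_add_apply, hper]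
    have hqr : ∀ s r : ℕ, (φ : X → X)^[(q + 1) * s + r] x = (φ : X → X)^[r] x := by
      intro s r
      induction s with
      | zero => simp
      | succ s ih =>
        rw [show (q + 1) * (s + 1) + r = (q + 1) + ((q + 1) * s + r) by ring,
          Function.iterate_add_apply, hcomm, ih]
    have hitmod : ∀ n : ℕ, (φ : X → X)^[n] x = (φ : X → X)^[n % (q + 1)] x := by
      intro n
      conv_lhs => rw [← Nat.div_add_mod n (q + 1)]
      exact hqr _ _
    have hsymm_it : ∀ n : ℕ, ∃ i : ℕ, i < q + 1 ∧
        (φ.symm : X → X)^[n] x = (φ : X → X)^[i] x := by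
      intro n
      refine ⟨(n * q) % (q + 1), Nat.mod_lt _ (by omega), ?_⟩
      have hback : (φ : X → X)^[n] ((φ : X → X)^[n * q] x) = x := by
        rw [← Function.iterate_add_apply, show n + n * q = (q + 1) * n + 0 by ring]
        simpa using hqr n 0
      have hli : ∀ y : X, (φ.symm : X → X)^[n] ((φ : X → X)^[n] y) = y :=
        fun y => Function.LeftInverse.iterate φ.symm_apply_apply n y
      calc (φ.symm : X → X)^[n] x
          = (φ.symm : X → X)^[n] ((φ : X → X)^[n] ((φ : X → X)^[n * q] x)) := by rw [hback]
        _ = (φ : X → X)^[n * q] x := hli _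
        _ = (φ : X → X)^[(n * q) % (q + 1)] x := hitmod _
    constructor
    · rintro ⟨m, ⟨hprob, hconf⟩, hnull⟩
      haveI := hprob
      have hwn : ∀ n : ℕ, m {(φ : X → X)^[n] x}
          = ENNReal.ofReal (Real.exp (β * ∑ i ∈ Finset.range n, F ((φ : X → X)^[i] x)))
              * m {x} := by
        intro n
        induction n with
        | zero => simp
        | succ n ih =>
          rw [Function.iterate_succ_apply', Stmt15.conf_singleton φ F β hconf, ih,
            Finset.sum_range_succ, mul_add, Stmt15.ofReal_exp_add]
          ring
      have horbm : MeasurableSet (zOrbit φ x) := (Stmt15.zOrbit_countable φ x).measurableSet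
      have hone : m (zOrbit φ x) = 1 := by
        have h := measure_add_measure_compl (μ := m) horbm
        rwa [hnull, add_zero, measure_univ] at h
      have hsub : zOrbit φ x ⊆ ⋃ i ∈ Finset.range (q + 1), {(φ : X → X)^[i] x} := by
        rintro y ⟨n, h | h⟩
        · exact Set.mem_biUnion (Finset.mem_range.mpr (Nat.mod_lt _ (by omega)))
            (by rw [Set.mem_singleton_iff]; exact h.trans (hitmod n))
        · obtain ⟨i, hi, he⟩ := hsymm_it n
          exact Set.mem_biUnion (Finset.mem_range.mpr hi)
            (by rw [Set.mem_singleton_iff]; exact h.trans he)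
      have hle : (1 : ℝ≥0∞) ≤ ∑ i ∈ Finset.range (q + 1), m {(φ : X → X)^[i] x} :=
        le_trans (le_trans hone.ge (measure_mono hsub)) (measure_biUnion_finset_le _ _)
      have hx0 : m {x} ≠ 0 := by
        intro h0
        have hz : ∀ i ∈ Finset.range (q + 1), m {(φ : X → X)^[i] x} = 0 := fun i _ => by
          rw [hwn i, h0, mul_zero]
        rw [Finset.sum_eq_zero hz] at hle
        simp at hle
      have hxtop : m {x} ≠ ⊤ := measure_ne_top m _
      have hEone : ENNReal.ofReal
          (Real.exp (β * ∑ i ∈ Finset.range (q + 1), F ((φ : X → X)^[i] x))) = 1 := by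
        have hp' : m {(φ : X → X)^[q + 1] x} = m {x} := by rw [hper]
        rw [hwn (q + 1)] at hp'
        have h1 : ENNReal.ofReal
            (Real.exp (β * ∑ i ∈ Finset.range (q + 1), F ((φ : X → X)^[i] x))) * m {x}
            = 1 * m {x} := by rw [one_mul]; exact hp'
        exact (ENNReal.mul_left_inj hx0 hxtop).mp h1
      rw [ENNReal.ofReal_eq_one] at hEone
      have h2 := congrArg Real.log hEone
      rw [Real.log_exp, Real.log_one] at h2
      rcases mul_eq_zero.mp h2 with h | h
      · exact absurd h hβ
      · exact h
    · intro hsum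
      haveI : NeZero (q + 1) := ⟨by omega⟩
      set c : ZMod (q + 1) → ℝ≥0∞ := fun i =>
        ENNReal.ofReal (Real.exp (β * ∑ j ∈ Finset.range i.val, F ((φ : X → X)^[j] x)))
        with hc
      have hval : ∀ i : ZMod (q + 1), (i + 1).val = (i.val + 1) % (q + 1) := by
        intro i
        conv_lhs => rw [← ZMod.natCast_rightInverse i]
        rw [show ((i.val : ZMod (q + 1)) + 1) = ((i.val + 1 : ℕ) : ZMod (q + 1)) by
          push_cast; ring, ZMod.val_natCast]
      have hgrw : ∀ i : ZMod (q + 1),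
          (φ : X → X)^[(i + 1).val] x = φ ((φ : X → X)^[i.val] x) := by
        intro i
        rw [hval, ← hitmod (i.val + 1), Function.iterate_succ_apply']
      have hcrw : ∀ i : ZMod (q + 1), c (i + 1)
          = c i * ENNReal.ofReal (Real.exp (β * F ((φ : X → X)^[i.val] x))) := by
        intro i
        simp only [hc]
        rw [← Stmt15.ofReal_exp_add, ← mul_add, ← Finset.sum_range_succ, hval]
        congr 2
        rcases eq_or_lt_of_le (Nat.succ_le_of_lt (ZMod.val_lt i)) with hq | hq
        · rw [show i.val + 1 = q + 1 from hq, Nat.mod_self, hsum]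
          simp
        · rw [Nat.mod_eq_of_lt hq]
      refine Stmt15.build_conformal φ F hF β x c (fun i => (φ : X → X)^[i.val] x)
        (Equiv.addRight 1) (fun i => by simpa using hgrw i) (fun i => by simpa using hcrw i)
        (fun i => ⟨i.val, Or.inl rfl⟩)
        (∑ i : ZMod (q + 1),
          Real.exp (β * ∑ j ∈ Finset.range i.val, F ((φ : X → X)^[j] x)))
        (Finset.sum_pos (fun i _ => Real.exp_pos _) Finset.univ_nonempty) ?_
      rw [Stmt15.atomic_apply _ _ MeasurableSet.univ]
      simp only [Set.mem_univ, if_true]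
      rw [tsum_fintype, ENNReal.ofReal_sum_of_nonneg (fun i _ => (Real.exp_pos _).le)]
  · -- part (b): non-periodic point
    intro x hx
    have hcrec : ∀ k : ℤ, ENNReal.ofReal (Real.exp (β * birkhoffZ φ F (k + 1) x))
        = ENNReal.ofReal (Real.exp (β * birkhoffZ φ F k x))
            * ENNReal.ofReal (Real.exp (β * F (Stmt15.pt φ x k))) := by
      intro k
      rw [Stmt15.birkhoffZ_add_one, mul_add, Stmt15.ofReal_exp_add]
    constructor
    · rintro ⟨m, ⟨hprob, hconf⟩, hnull⟩
      haveI := hprob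
      have e1 : ∀ j a : ℤ, (φ.toEquiv ^ (-j)) (Stmt15.pt φ x a) = Stmt15.pt φ x (a - j) := by
        intro j a
        simp only [Stmt15.pt, ← Equiv.Perm.mul_apply, ← zpow_add]
        rw [show -j + a = a - j by ring]
      have hinj : Function.Injective (Stmt15.pt φ x) := by
        have key : ∀ j k : ℤ, j < k → Stmt15.pt φ x j ≠ Stmt15.pt φ x k := by
          intro j k hjk heq
          have h2 := congrArg (φ.toEquiv ^ (-j)) heq
          rw [e1, e1, sub_self, Stmt15.pt_zero] at h2
          apply hx (k - j).toNat (by omega)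
          rw [← Stmt15.pt_natCast, show ((k - j).toNat : ℤ) = k - j by omega]
          exact h2.symm
        intro j k h
        by_contra hne
        rcases lt_trichotomy j k with hlt | he | hlt
        · exact key j k hlt h
        · exact hne he
        · exact key k j hlt h.symm
      have hrec : ∀ k : ℤ, m {Stmt15.pt φ x (k + 1)}
          = ENNReal.ofReal (Real.exp (β * F (Stmt15.pt φ x k))) * m {Stmt15.pt φ x k} := by
        intro k
        rw [Stmt15.pt_add_one]
        exact Stmt15.conf_singleton φ F β hconf _
      have hw : ∀ k : ℤ, m {Stmt15.pt φ x k}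
          = m {x} * ENNReal.ofReal (Real.exp (β * birkhoffZ φ F k x)) := by
        have step : ∀ k : ℤ,
            m {Stmt15.pt φ x k} = m {x} * ENNReal.ofReal (Real.exp (β * birkhoffZ φ F k x)) →
            m {Stmt15.pt φ x (k + 1)}
              = m {x} * ENNReal.ofReal (Real.exp (β * birkhoffZ φ F (k + 1) x)) := by
          intro k h
          rw [hrec, h, hcrec]
          ring
        have back : ∀ k : ℤ,
            m {Stmt15.pt φ x (k + 1)}
              = m {x} * ENNReal.ofReal (Real.exp (β * birkhoffZ φ F (k + 1) x)) →
            m {Stmt15.pt φ x k} = m {x} * ENNReal.ofReal (Real.exp (β * birkhoffZ φ F k x)) := by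
          intro k h
          have hE0 : ENNReal.ofReal (Real.exp (β * F (Stmt15.pt φ x k))) ≠ 0 :=
            (ENNReal.ofReal_pos.mpr (Real.exp_pos _)).ne'
          have hEtop : ENNReal.ofReal (Real.exp (β * F (Stmt15.pt φ x k))) ≠ ⊤ :=
            ENNReal.ofReal_ne_top
          refine (ENNReal.mul_right_inj hE0 hEtop).mp ?_
          rw [← hrec, h, hcrec]
          ring
        intro k
        induction k using Int.induction_on with
        | zero =>
          rw [Stmt15.pt_zero, Stmt15.birkhoffZ_zero, mul_zero, Real.exp_zero,
            ENNReal.ofReal_one, mul_one]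
        | succ n ih => exact step n ih
        | pred n ih =>
          have h := back (-(n : ℤ) - 1)
          rw [sub_add_cancel] at h
          exact h ih
      have horbm : MeasurableSet (zOrbit φ x) := (Stmt15.zOrbit_countable φ x).measurableSet
      have hone : m (zOrbit φ x) = 1 := by
        have h := measure_add_measure_compl (μ := m) horbm
        rwa [hnull, add_zero, measure_univ] at h
      have hUn : zOrbit φ x = ⋃ k : ℤ, {Stmt15.pt φ x k} := by
        rw [Stmt15.zOrbit_eq_range]
        ext y
        simp only [Set.mem_range, Set.mem_iUnion, Set.mem_singleton_iff]
        exact exists_congr fun k => eq_comm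
      have hdisj : Pairwise (Function.onFun Disjoint fun k : ℤ => ({Stmt15.pt φ x k} : Set X)) := by
        intro j k hjk
        simp only [Function.onFun, Set.disjoint_singleton]
        exact hinj.ne hjk
      have hsum1 : ∑' k : ℤ, m {Stmt15.pt φ x k} = 1 := by
        rw [← measure_iUnion hdisj fun k => measurableSet_singleton _, ← hUn, hone]
      have hsum2 : m {x} * ∑' k : ℤ, ENNReal.ofReal (Real.exp (β * birkhoffZ φ F k x)) = 1 := by
        rw [← ENNReal.tsum_mul_left, ← hsum1]
        exact tsum_congr fun k => (hw k).symm
      have hx0 : m {x} ≠ 0 := by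
        intro h0; rw [h0, zero_mul] at hsum2; exact zero_ne_one hsum2
      have htop : ∑' k : ℤ, ENNReal.ofReal (Real.exp (β * birkhoffZ φ F k x)) ≠ ⊤ := by
        intro h
        rw [h, ENNReal.mul_top hx0] at hsum2
        exact ENNReal.top_ne_one hsum2
      refine (ENNReal.summable_toReal htop).congr fun k => ?_
      rw [ENNReal.toReal_ofReal (Real.exp_nonneg _)]
    · intro hs
      have hZ1 : (1 : ℝ) ≤ ∑' k : ℤ, Real.exp (β * birkhoffZ φ F k x) := by
        have h := Summable.le_tsum hs 0 fun j _ => (Real.exp_pos _).le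
        rwa [Stmt15.birkhoffZ_zero, mul_zero, Real.exp_zero] at h
      refine Stmt15.build_conformal φ F hF β x
        (fun k => ENNReal.ofReal (Real.exp (β * birkhoffZ φ F k x))) (Stmt15.pt φ x)
        (Equiv.addRight 1) (fun k => by simpa using Stmt15.pt_add_one φ x k)
        (fun k => by simpa using hcrec k)
        (fun k => by rw [Stmt15.zOrbit_eq_range]; exact Set.mem_range_self k)
        (∑' k : ℤ, Real.exp (β * birkhoffZ φ F k x)) (by linarith) ?_
      rw [Stmt15.atomic_apply _ _ MeasurableSet.univ]
      simp only [Set.mem_univ, if_true]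
      rw [ENNReal.ofReal_tsum_of_nonneg (fun k => Real.exp_nonneg _) hs]
end
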